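/- (Matrix BNP lemma, high-dimensional Fourier mass) Let G be a finite group and f, g : G → M_t(ℂ). For any D ≥ 1, let T be the set of irreducible representations of G of dimension at least D. Then Σ_{ρ∈T} d_ρ ‖(f*g)^(ρ)‖²_HS ≤ (1/D) ‖f‖₂² ‖g‖₂², where ‖f‖₂² = E_x[‖f(x)‖²_HS]. -/

import Mathlib

open scoped Kronecker ComplexOrder
open Finset Matrix

attribute [local instance] Classical.propDecidable

noncomputable section

def hsNormSq {m n : Type*} [Fintype m] [Fintype n] (A : Matrix m n ℂ) : ℝ :=
  ∑ i, ∑ j, Complex.normSq (A i j)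

def vnorm {n : ℕ} (u : Fin n → ℂ) : ℝ := Real.sqrt (∑ i, Complex.normSq (u i))

def opNorm {d : ℕ} (M : Matrix (Fin d) (Fin d) ℂ) : ℝ :=
  ‖Matrix.toEuclideanCLM (𝕜 := ℂ) M‖

def traceNorm {m : Type*} [Fintype m] [DecidableEq m] (A : Matrix m m ℂ) : ℝ :=
  (((Matrix.posSemidef_conjTranspose_mul_self A).1.eigenvectorUnitary : Matrix m m ℂ) *
      diagonal ((fun r : ℝ => (r : ℂ)) ∘ (√·) ∘ (Matrix.posSemidef_conjTranspose_mul_self A).1.eigenvalues) *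
      (star (Matrix.posSemidef_conjTranspose_mul_self A).1.eigenvectorUnitary : Matrix m m ℂ)).trace.re

variable {G : Type*} [Group G] [Fintype G]

def conv {t : ℕ} (f g : G → Matrix (Fin t) (Fin t) ℂ) (x : G) : Matrix (Fin t) (Fin t) ℂ :=
  (Fintype.card G : ℂ)⁻¹ • ∑ y, f (x * y⁻¹) * g y

def adjFun {t : ℕ} (f : G → Matrix (Fin t) (Fin t) ℂ) (x : G) : Matrix (Fin t) (Fin t) ℂ :=
  (f x⁻¹)ᴴ

def fourierMat {t d : ℕ} (f : G → Matrix (Fin t) (Fin t) ℂ)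
    (ρ : G →* Matrix.unitaryGroup (Fin d) ℂ) : Matrix (Fin t × Fin d) (Fin t × Fin d) ℂ :=
  (Fintype.card G : ℂ)⁻¹ • ∑ x, (f x) ⊗ₖ (ρ x : Matrix (Fin d) (Fin d) ℂ)

def l2sq {t : ℕ} (f : G → Matrix (Fin t) (Fin t) ℂ) : ℝ :=
  (Fintype.card G : ℝ)⁻¹ * ∑ x, hsNormSq (f x)

def u2pow4 {t : ℕ} (f : G → Matrix (Fin t) (Fin t) ℂ) : ℝ := l2sq (conv (adjFun f) f)

def IsIrred {d : ℕ} (ρ : G →* Matrix.unitaryGroup (Fin d) ℂ) : Prop :=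
  ∀ M : Matrix (Fin d) (Fin d) ℂ,
    (∀ g, (ρ g : Matrix (Fin d) (Fin d) ℂ) * M = M * (ρ g : Matrix (Fin d) (Fin d) ℂ)) →
    ∃ c : ℂ, M = c • (1 : Matrix (Fin d) (Fin d) ℂ)

def IsNontrivialRep {d : ℕ} (ρ : G →* Matrix.unitaryGroup (Fin d) ℂ) : Prop :=
  ∃ g, (ρ g : Matrix (Fin d) (Fin d) ℂ) ≠ 1

def IsBiased (S : Finset G) (ε : ℝ) : Prop :=
  S.Nonempty ∧ ∀ (d : ℕ) (ρ : G →* Matrix.unitaryGroup (Fin d) ℂ),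
    IsIrred ρ → IsNontrivialRep ρ →
    opNorm ((S.card : ℂ)⁻¹ • ∑ s ∈ S, (ρ s : Matrix (Fin d) (Fin d) ℂ)) ≤ ε

def Tmat (f : G → ℂ) : Matrix G G ℂ := fun x y => f (x⁻¹ * y) / (Fintype.card G : ℂ)

/-
The convolution identity and submultiplicativity of the Hilbert–Schmidt norm give
`d_ρ ‖(f*g)^(ρ)‖² ≤ d_ρ ‖f̂(ρ)‖² ‖ĝ(ρ)‖²`. By Schur orthogonality the functions
`x ↦ √(d_ρ/|G|) · conj ρ(x)_{pq}` are orthonormal in `ℓ²(G)`, so Bessel's inequality applied to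
each entry of `f` yields `Σ_ρ d_ρ ‖f̂(ρ)‖² ≤ ‖f‖₂²`. In particular `‖ĝ(ρ)‖² ≤ ‖g‖₂² / D` whenever
`d_ρ ≥ D`, and summing over `ρ ∈ T` gives the bound.
-/

section HilbertSchmidt

variable {l m n : Type*} [Fintype l] [Fintype m] [Fintype n]

attribute [local instance] Matrix.frobeniusNormedAddCommGroup

lemma hsNormSq_eq_frobenius_norm_sq (A : Matrix m n ℂ) : hsNormSq A = ‖A‖ ^ 2 := by
  rw [frobenius_norm_def, ← Real.rpow_natCast, ← Real.rpow_mul (by positivity)]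
  norm_num [hsNormSq, Complex.normSq_eq_norm_sq]

lemma hsNormSq_nonneg (A : Matrix m n ℂ) : 0 ≤ hsNormSq A :=
  hsNormSq_eq_frobenius_norm_sq A ▸ sq_nonneg _

lemma hsNormSq_mul_le (A : Matrix l m ℂ) (B : Matrix m n ℂ) :
    hsNormSq (A * B) ≤ hsNormSq A * hsNormSq B := by
  simp only [hsNormSq_eq_frobenius_norm_sq, ← mul_pow]
  exact pow_le_pow_left₀ (norm_nonneg _) (frobenius_norm_mul A B) 2

end HilbertSchmidt

lemma sum_kronecker {ι l m n p α : Type*} [CommSemiring α] (s : Finset ι) (A : ι → Matrix l m α)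
    (B : Matrix n p α) : (∑ i ∈ s, A i) ⊗ₖ B = ∑ i ∈ s, A i ⊗ₖ B :=
  map_sum ((kroneckerBilinear (R := α) (l := l) (m := m) (n := n) (p := p) (α := α)).flip B) A s

lemma fourierMat_conv {t d : ℕ} (f g : G → Matrix (Fin t) (Fin t) ℂ)
    (ρ : G →* Matrix.unitaryGroup (Fin d) ℂ) :
    fourierMat (conv f g) ρ = fourierMat f ρ * fourierMat g ρ := by
  have hshift : ∀ y, ∑ x, (f (x * y⁻¹) * g y) ⊗ₖ (ρ x).1
      = ∑ x, (f x * g y) ⊗ₖ (ρ (x * y)).1 :=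
    fun y => Fintype.sum_equiv (Equiv.mulRight y⁻¹) _ _ (fun x => by simp)
  simp only [fourierMat, conv, smul_kronecker, sum_kronecker, ← Finset.smul_sum, smul_mul_smul,
    Finset.sum_mul, Finset.mul_sum, ← mul_kronecker_mul]
  rw [Finset.sum_comm]
  simp only [hshift, map_mul, Submonoid.coe_mul, smul_smul]

section Schur

variable {m n : Type*} [Fintype m] [Fintype n] [DecidableEq m] [DecidableEq n]

def Intertwines (ρ : G →* unitaryGroup m ℂ) (σ : G →* unitaryGroup n ℂ) (M : Matrix m n ℂ) :
    Prop :=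
  ∀ g, (ρ g).1 * M = M * (σ g).1

lemma Matrix.UnitaryGroup.conjTranspose_mul_self (U : unitaryGroup n ℂ) : U.1ᴴ * U.1 = 1 :=
  UnitaryGroup.star_mul_self U

lemma intertwines_sum_mul_mul_conjTranspose (ρ : G →* unitaryGroup m ℂ)
    (σ : G →* unitaryGroup n ℂ) (M : Matrix m n ℂ) :
    Intertwines ρ σ (∑ x, (ρ x).1 * M * (σ x).1ᴴ) := by
  intro g
  rw [Matrix.mul_sum, Matrix.sum_mul]
  refine Fintype.sum_equiv (Equiv.mulLeft g) _ _ fun x => ?_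
  simp only [Equiv.coe_mulLeft, map_mul, Submonoid.coe_mul, conjTranspose_mul, Matrix.mul_assoc,
    UnitaryGroup.conjTranspose_mul_self, Matrix.mul_one]

lemma mul_single_one_mul_apply {α : Type*} [Semiring α] (A : Matrix m m α) (B : Matrix n n α)
    (p q : m) (r s : n) : (A * single q s (1 : α) * B) p r = A p q * B s r := by
  simp [Matrix.mul_apply, single, ite_and]

lemma sum_apply_mul_star_apply_eq_zero (ρ : G →* unitaryGroup m ℂ) (σ : G →* unitaryGroup n ℂ)
    (h : ∀ M, Intertwines ρ σ M → M = 0) (p q : m) (r s : n) :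
    ∑ x, (ρ x).1 p q * star ((σ x).1 r s) = 0 := by
  have := congrFun (congrFun (h _ (intertwines_sum_mul_mul_conjTranspose ρ σ (single q s 1))) p) r
  simpa [Matrix.sum_apply, mul_single_one_mul_apply] using this

lemma trace_single_eq_ite {α : Type*} [AddCommMonoid α] (q s : n) (c : α) :
    trace (single q s c) = if q = s then c else 0 := by
  split_ifs with h
  · exact h ▸ trace_single_eq_same q c
  · exact trace_single_eq_of_ne q s c h

lemma sum_apply_mul_star_apply_self {d : ℕ} (ρ : G →* unitaryGroup (Fin d) ℂ) (hρ : IsIrred ρ)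
    (p q r s : Fin d) :
    ∑ x, (ρ x).1 p q * star ((ρ x).1 r s)
      = if p = r ∧ q = s then (Fintype.card G : ℂ) / d else 0 := by
  set A := ∑ x, (ρ x).1 * single q s (1 : ℂ) * (ρ x).1ᴴ
  obtain ⟨c, hc⟩ := hρ A (intertwines_sum_mul_mul_conjTranspose ρ ρ _)
  have htrace : trace A = Fintype.card G * if q = s then 1 else 0 := by
    simp [A, trace_sum, trace_mul_cycle, UnitaryGroup.conjTranspose_mul_self, trace_single_eq_ite]
  have hd : (d : ℂ) ≠ 0 := Nat.cast_ne_zero.2 (Fin.pos p).ne'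
  have hc' : c = Fintype.card G * (if q = s then 1 else 0) / d := by
    rw [eq_div_iff hd, ← htrace, hc]
    simp
  have hentry := congrFun (congrFun hc p) r
  simp only [A, Matrix.sum_apply, mul_single_one_mul_apply, conjTranspose_apply] at hentry
  rw [hentry, hc']
  by_cases hpr : p = r <;> by_cases hqs : q = s <;> simp [hpr, hqs]

end Schur

def coeffVec {d : ℕ} (ρ : G →* unitaryGroup (Fin d) ℂ) (p q : Fin d) : EuclideanSpace ℂ G :=
  WithLp.toLp 2 fun x => star ((ρ x).1 p q)

lemma inner_coeffVec_coeffVec {d₁ d₂ : ℕ} (ρ : G →* unitaryGroup (Fin d₁) ℂ)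
    (σ : G →* unitaryGroup (Fin d₂) ℂ) (p q : Fin d₁) (r s : Fin d₂) :
    inner ℂ (coeffVec ρ p q) (coeffVec σ r s) = ∑ x, (ρ x).1 p q * star ((σ x).1 r s) := by
  simp [coeffVec, PiLp.inner_apply, mul_comm]

lemma fourierMat_apply {t d : ℕ} (f : G → Matrix (Fin t) (Fin t) ℂ)
    (ρ : G →* unitaryGroup (Fin d) ℂ) (a b : Fin t) (p q : Fin d) :
    fourierMat f ρ (a, p) (b, q) = (Fintype.card G : ℂ)⁻¹ * ∑ x, f x a b * (ρ x).1 p q := by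
  simp [fourierMat, Matrix.sum_apply]

lemma hsNormSq_fourierMat {t d : ℕ} (f : G → Matrix (Fin t) (Fin t) ℂ)
    (ρ : G →* unitaryGroup (Fin d) ℂ) :
    hsNormSq (fourierMat f ρ) = ((Fintype.card G : ℝ)⁻¹) ^ 2 *
      ∑ a, ∑ b, ∑ p, ∑ q, Complex.normSq (∑ x, f x a b * (ρ x).1 p q) := by
  simp only [hsNormSq, Fintype.sum_prod_type, fourierMat_apply, Complex.normSq_mul,
    Complex.normSq_inv, Complex.normSq_natCast, ← Finset.mul_sum, ← sq]
  rw [inv_pow]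
  exact congrArg _ (Finset.sum_congr rfl fun a _ => Finset.sum_comm)

section Bessel

variable {I : Type*} {d : I → ℕ} (ρ : ∀ i, G →* unitaryGroup (Fin (d i)) ℂ)

lemma orthonormal_coeffVec (hirr : ∀ i, IsIrred (ρ i))
    (hdisj : ∀ i j, i ≠ j → ∀ M, Intertwines (ρ i) (ρ j) M → M = 0) :
    Orthonormal ℂ fun k : Σ i, Fin (d i) × Fin (d i) =>
      ((√(d k.1 / Fintype.card G) : ℝ) : ℂ) • coeffVec (ρ k.1) k.2.1 k.2.2 := by
  rw [orthonormal_iff_ite]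
  rintro ⟨i, p, q⟩ ⟨j, r, s⟩
  simp only [inner_smul_left, inner_smul_right, inner_coeffVec_coeffVec, Complex.conj_ofReal]
  by_cases hij : i = j
  · subst hij
    rw [sum_apply_mul_star_apply_self _ (hirr i)]
    simp only [Sigma.mk.inj_iff, heq_eq_eq, Prod.mk.injEq, true_and]
    split_ifs
    · have hd : (d i : ℂ) ≠ 0 := Nat.cast_ne_zero.2 (Fin.pos p).ne'
      have hN : (Fintype.card G : ℂ) ≠ 0 := Nat.cast_ne_zero.2 Fintype.card_ne_zero
      rw [← mul_assoc, ← Complex.ofReal_mul, Real.mul_self_sqrt (by positivity)]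
      push_cast
      field_simp
    · rw [mul_zero, mul_zero]
  · rw [sum_apply_mul_star_apply_eq_zero _ _ (hdisj i j hij), if_neg (by simp [hij]), mul_zero,
      mul_zero]

lemma sum_dim_mul_sum_normSq_le [Fintype I] (hirr : ∀ i, IsIrred (ρ i))
    (hdisj : ∀ i j, i ≠ j → ∀ M, Intertwines (ρ i) (ρ j) M → M = 0) (φ : G → ℂ) :
    ∑ i, (d i : ℝ) * ∑ p, ∑ q, Complex.normSq (∑ x, φ x * (ρ i x).1 p q)
      ≤ Fintype.card G * ∑ x, Complex.normSq (φ x) := by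
  have hbessel := (orthonormal_coeffVec ρ hirr hdisj).sum_inner_products_le
    (WithLp.toLp 2 φ) (s := univ)
  have hinner : ∀ i (p q : Fin (d i)),
      ‖inner ℂ (((√(d i / Fintype.card G) : ℝ) : ℂ) • coeffVec (ρ i) p q) (WithLp.toLp 2 φ)‖ ^ 2
        = d i / Fintype.card G * Complex.normSq (∑ x, φ x * (ρ i x).1 p q) := by
    intro i p q
    rw [inner_smul_left, Complex.conj_ofReal, norm_mul, mul_pow, Complex.norm_real,
      Real.norm_eq_abs, sq_abs, Real.sq_sqrt (by positivity), Complex.sq_norm]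
    simp [coeffVec, PiLp.inner_apply]
  have hN : (0 : ℝ) < Fintype.card G := Nat.cast_pos.2 Fintype.card_pos
  simp only [Fintype.sum_sigma, Fintype.sum_prod_type, hinner, EuclideanSpace.norm_sq_eq,
    Complex.sq_norm, ← Finset.mul_sum, div_mul_eq_mul_div, ← Finset.sum_div,
    div_le_iff₀ hN] at hbessel
  linarith

lemma sum_dim_mul_hsNormSq_fourierMat_le [Fintype I] (hirr : ∀ i, IsIrred (ρ i))
    (hdisj : ∀ i j, i ≠ j → ∀ M, Intertwines (ρ i) (ρ j) M → M = 0) {t : ℕ}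
    (f : G → Matrix (Fin t) (Fin t) ℂ) :
    ∑ i, (d i : ℝ) * hsNormSq (fourierMat f (ρ i)) ≤ l2sq f := by
  have hN : (0 : ℝ) < Fintype.card G := Nat.cast_pos.2 Fintype.card_pos
  calc ∑ i, (d i : ℝ) * hsNormSq (fourierMat f (ρ i))
      = ((Fintype.card G : ℝ)⁻¹) ^ 2 * ∑ a, ∑ b, ∑ i, (d i : ℝ) *
          ∑ p, ∑ q, Complex.normSq (∑ x, f x a b * (ρ i x).1 p q) := by
        simp only [hsNormSq_fourierMat, Finset.mul_sum]
        rw [Finset.sum_comm]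
        refine Finset.sum_congr rfl fun a _ => ?_
        rw [Finset.sum_comm]
        exact Finset.sum_congr rfl fun b _ => Finset.sum_congr rfl fun i _ =>
          Finset.sum_congr rfl fun p _ => Finset.sum_congr rfl fun q _ => mul_left_comm _ _ _
    _ ≤ ((Fintype.card G : ℝ)⁻¹) ^ 2 *
          ∑ a, ∑ b, Fintype.card G * ∑ x, Complex.normSq (f x a b) := by
        gcongr with a _ b _
        exact sum_dim_mul_sum_normSq_le ρ hirr hdisj _
    _ = l2sq f := by
        have hswap : ∑ x, hsNormSq (f x) = ∑ a, ∑ b, ∑ x, Complex.normSq (f x a b) := by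
          simp only [hsNormSq]
          rw [Finset.sum_comm]
          exact Finset.sum_congr rfl fun a _ => Finset.sum_comm
        rw [l2sq, hswap]
        simp only [← Finset.mul_sum]
        field_simp

lemma finset_sum_dim_mul_hsNormSq_fourierMat_le [Fintype I] (hirr : ∀ i, IsIrred (ρ i))
    (hdisj : ∀ i j, i ≠ j → ∀ M, Intertwines (ρ i) (ρ j) M → M = 0) {t : ℕ}
    (f : G → Matrix (Fin t) (Fin t) ℂ) (s : Finset I) :
    ∑ i ∈ s, (d i : ℝ) * hsNormSq (fourierMat f (ρ i)) ≤ l2sq f :=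
  (Finset.sum_le_sum_of_subset_of_nonneg (Finset.subset_univ s) fun _ _ _ =>
    mul_nonneg (Nat.cast_nonneg _) (hsNormSq_nonneg _)).trans
    (sum_dim_mul_hsNormSq_fourierMat_le ρ hirr hdisj f)

end Bessel

lemma hsNormSq_fourierMat_conv_le {t d : ℕ} (f g : G → Matrix (Fin t) (Fin t) ℂ)
    (ρ : G →* unitaryGroup (Fin d) ℂ) :
    hsNormSq (fourierMat (conv f g) ρ) ≤ hsNormSq (fourierMat f ρ) * hsNormSq (fourierMat g ρ) :=
  fourierMat_conv f g ρ ▸ hsNormSq_mul_le _ _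

lemma l2sq_nonneg {t : ℕ} (f : G → Matrix (Fin t) (Fin t) ℂ) : 0 ≤ l2sq f :=
  mul_nonneg (by positivity) (Finset.sum_nonneg fun x _ => hsNormSq_nonneg (f x))

theorem matrix_bnp_high_mass_general {G : Type*} [Group G] [Fintype G] {t : ℕ}
    {I : Type*} [Fintype I] (d : I → ℕ) (ρ : ∀ i, G →* Matrix.unitaryGroup (Fin (d i)) ℂ)
    (hirr : ∀ i, IsIrred (ρ i))
    (hdisj : ∀ i j, i ≠ j → ∀ M : Matrix (Fin (d i)) (Fin (d j)) ℂ,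
      (∀ g, (ρ i g : Matrix (Fin (d i)) (Fin (d i)) ℂ) * M
          = M * (ρ j g : Matrix (Fin (d j)) (Fin (d j)) ℂ)) → M = 0)
    (f g : G → Matrix (Fin t) (Fin t) ℂ) (D : ℕ) (hD : 1 ≤ D) :
    ∑ i ∈ Finset.univ.filter (fun i => D ≤ d i),
        (d i : ℝ) * hsNormSq (fourierMat (conv f g) (ρ i))
      ≤ (1 / (D : ℝ)) * l2sq f * l2sq g := by
  set T := Finset.univ.filter (fun i => D ≤ d i)
  have hD' : (0 : ℝ) < D := Nat.cast_pos.2 hD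
  have hg : ∀ i ∈ T, hsNormSq (fourierMat g (ρ i)) ≤ l2sq g / D := fun i hi => by
    rw [le_div_iff₀ hD', mul_comm]
    calc (D : ℝ) * hsNormSq (fourierMat g (ρ i))
        ≤ d i * hsNormSq (fourierMat g (ρ i)) :=
          mul_le_mul_of_nonneg_right (mod_cast (Finset.mem_filter.1 hi).2) (hsNormSq_nonneg _)
      _ ≤ l2sq g := by simpa using finset_sum_dim_mul_hsNormSq_fourierMat_le ρ hirr hdisj g {i}
  calc ∑ i ∈ T, (d i : ℝ) * hsNormSq (fourierMat (conv f g) (ρ i))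
      ≤ ∑ i ∈ T, (d i : ℝ) * hsNormSq (fourierMat f (ρ i)) * (l2sq g / D) :=
        Finset.sum_le_sum fun i hi => by
          rw [mul_assoc]
          gcongr
          exact (hsNormSq_fourierMat_conv_le f g (ρ i)).trans
            (mul_le_mul_of_nonneg_left (hg i hi) (hsNormSq_nonneg _))
    _ ≤ l2sq f * (l2sq g / D) := by
        rw [← Finset.sum_mul]
        exact mul_le_mul_of_nonneg_right
          (finset_sum_dim_mul_hsNormSq_fourierMat_le ρ hirr hdisj f T)
          (div_nonneg (l2sq_nonneg g) hD'.le)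
    _ = (1 / (D : ℝ)) * l2sq f * l2sq g := by ring

theorem matrix_bnp_high_mass {G : Type*} [Group G] [Fintype G] {t : ℕ}
    {I : Type*} [Fintype I] (d : I → ℕ) (ρ : ∀ i, G →* Matrix.unitaryGroup (Fin (d i)) ℂ)
    (hpos : ∀ i, 0 < d i) (hirr : ∀ i, IsIrred (ρ i))
    (hdisj : ∀ i j, i ≠ j → ∀ M : Matrix (Fin (d i)) (Fin (d j)) ℂ,
      (∀ g, (ρ i g : Matrix (Fin (d i)) (Fin (d i)) ℂ) * M
          = M * (ρ j g : Matrix (Fin (d j)) (Fin (d j)) ℂ)) → M = 0)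
    (hcomplete : ∑ i, (d i) ^ 2 = Fintype.card G)
    (f g : G → Matrix (Fin t) (Fin t) ℂ) (D : ℕ) (hD : 1 ≤ D) :
    ∑ i ∈ Finset.univ.filter (fun i => D ≤ d i),
        (d i : ℝ) * hsNormSq (fourierMat (conv f g) (ρ i))
      ≤ (1 / (D : ℝ)) * l2sq f * l2sq g :=
  matrix_bnp_high_mass_general d ρ hirr hdisj f g D hD
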